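/- Let φ(t) = (1/√(2π))·e^{−t²/2} and Φ(z) = ∫_{−∞}^{z} φ(t) dt. Then for all real constants a and c, ∫_{−∞}^{∞} Φ(a + c·t)·φ(t) dt = Φ( a / √(1 + c²) ). -/

import Mathlib

open MeasureTheory

/-- The standard normal density `φ(t) = (1/√(2π)) e^{-t²/2}`. -/
noncomputable def phi (t : ℝ) : ℝ := (1 / Real.sqrt (2 * Real.pi)) * Real.exp (-t ^ 2 / 2)

/-- The standard normal distribution function `Φ(z) = ∫_{-∞}^z φ(t) dt`. -/
noncomputable def Phi (z : ℝ) : ℝ := ∫ t in Set.Iic z, phi t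

open Real Set

lemma phi_nonneg (t : ℝ) : 0 ≤ phi t := by
  unfold phi; positivity

lemma phi_cont : Continuous phi := by
  unfold phi; fun_prop

lemma phi_integrable : Integrable phi := by
  have h : Integrable (fun t : ℝ => Real.exp (-(1/2) * t ^ 2)) := integrable_exp_neg_mul_sq (by norm_num)
  have := h.const_mul (1 / Real.sqrt (2 * Real.pi))
  convert this using 2 with t
  unfold phi
  ring_nf

lemma integral_Iic_comp_add_right (f : ℝ → ℝ) (a d : ℝ) :
    (∫ x in Iic a, f (x + d)) = ∫ x in Iic (a + d), f x := by
  have h := (measurePreserving_add_right (volume : Measure ℝ) d).setIntegral_preimage_emb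
    (measurableEmbedding_addRight d) f (Iic (a + d))
  simpa using h

lemma Phi_shift (z d : ℝ) : Phi (z + d) = ∫ x in Iic z, phi (x + d) := by
  rw [Phi, ← integral_Iic_comp_add_right]

lemma integral_comp_mul_left_Iic' (g : ℝ → ℝ) (a : ℝ) {k : ℝ} (hk : 0 < k) :
    (∫ x in Iic a, g (k * x)) = k⁻¹ • ∫ x in Iic (k * a), g x := by
  have h : ∀ c : ℝ, MeasurableSet (Iic c) := fun c => measurableSet_Iic
  rw [← integral_indicator (h a), ← integral_indicator (h (k * a)),
    ← abs_of_pos (inv_pos.mpr hk), ← Measure.integral_comp_mul_left]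
  congr 1
  ext1 x
  rw [← Set.indicator_comp_right, show HMul.hMul k ⁻¹' Iic (k * a) = Iic (k * a / k) from
      Set.preimage_const_mul_Iic₀ (k * a) hk,
    mul_div_cancel_left₀ _ hk.ne']
  rfl

lemma gauss_conv (c s : ℝ) :
    (∫ t : ℝ, phi (s + c * t) * phi t) =
      (Real.sqrt (1 + c ^ 2))⁻¹ * phi (s / Real.sqrt (1 + c ^ 2)) := by
  generalize hbdef : 1 + c ^ 2 = b
  have hb : 0 < b := by rw [← hbdef]; positivity
  have hsb : Real.sqrt b > 0 := Real.sqrt_pos.mpr hb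
  have key : ∀ t : ℝ, phi (s + c * t) * phi t =
      ((1 / (2 * Real.pi)) * Real.exp (-s ^ 2 / (2 * b))) *
        Real.exp (-(b / 2) * (t + c * s / b) ^ 2) := by
    intro t
    unfold phi
    rw [mul_mul_mul_comm, ← Real.exp_add]
    have hsqrt : (1 / Real.sqrt (2 * Real.pi)) * (1 / Real.sqrt (2 * Real.pi))
        = 1 / (2 * Real.pi) := by
      rw [div_mul_div_comm, one_mul, Real.mul_self_sqrt (by positivity)]
    rw [hsqrt, mul_assoc, ← Real.exp_add]
    congr 2
    rw [← hbdef]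
    field_simp
    ring
  simp_rw [key]
  rw [integral_const_mul]
  have h1 : (∫ t : ℝ, Real.exp (-(b / 2) * (t + c * s / b) ^ 2))
      = Real.sqrt (Real.pi / (b / 2)) := by
    rw [integral_add_right_eq_self (fun t => Real.exp (-(b / 2) * t ^ 2)) (c * s / b)]
    exact integral_gaussian (b / 2)
  rw [h1]
  unfold phi
  rw [div_pow, Real.sq_sqrt hb.le]
  have h2 : Real.sqrt (Real.pi / (b / 2)) = Real.sqrt (2 * Real.pi) / Real.sqrt b := by
    rw [show Real.pi / (b / 2) = (2 * Real.pi) / b by field_simp,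
      Real.sqrt_div (by positivity) b]
  rw [h2, show -s ^ 2 / (2 * b) = -(s ^ 2 / b) / 2 by ring]
  have h3 : Real.sqrt (2 * Real.pi) * Real.sqrt (2 * Real.pi) = 2 * Real.pi :=
    Real.mul_self_sqrt (by positivity)
  rw [← h3]
  field_simp
  ring_nf
  rw [Real.sq_sqrt (by positivity)]

lemma integral_phi : ∫ t : ℝ, phi t = 1 := by
  unfold phi
  rw [integral_const_mul]
  have : ∀ t : ℝ, Real.exp (-t ^ 2 / 2) = Real.exp (-(1/2) * t ^ 2) := by
    intro t; ring_nf
  simp_rw [this, integral_gaussian]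
  rw [show Real.pi / (1/2) = 2 * Real.pi by ring]
  rw [div_mul_cancel₀]
  exact Real.sqrt_ne_zero'.mpr (by positivity)

lemma Phi_nonneg (z : ℝ) : 0 ≤ Phi z :=
  integral_nonneg fun t => phi_nonneg t

lemma Phi_le_one (z : ℝ) : Phi z ≤ 1 := by
  rw [← integral_phi]
  exact setIntegral_le_integral phi_integrable (Filter.Eventually.of_forall phi_nonneg)

lemma Phi_mono : Monotone Phi := by
  intro z z' h
  exact setIntegral_mono_set phi_integrable.integrableOn
    (Filter.Eventually.of_forall phi_nonneg)
    (HasSubset.Subset.eventuallyLE (Set.Iic_subset_Iic.mpr h))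

lemma Phi_measurable : Measurable Phi := Phi_mono.measurable

theorem stmt12 (a c : ℝ) :
    (∫ t : ℝ, Phi (a + c * t) * phi t) = Phi (a / Real.sqrt (1 + c ^ 2)) := by
  have hb : (0:ℝ) < 1 + c ^ 2 := by positivity
  have hsb : (0:ℝ) < Real.sqrt (1 + c ^ 2) := Real.sqrt_pos.mpr hb
  -- step 1: rewrite Phi (a + c*t) * phi t as an inner integral
  have step1 : ∀ t : ℝ, Phi (a + c * t) * phi t
      = ∫ x in Set.Iic a, phi (x + c * t) * phi t := by
    intro t
    rw [Phi_shift a (c * t), ← integral_mul_const]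
  simp_rw [step1]
  -- integrability on the product for Fubini
  have hmeas : AEStronglyMeasurable
      (Function.uncurry fun (t x : ℝ) => phi (x + c * t) * phi t)
      ((volume : Measure ℝ).prod ((volume : Measure ℝ).restrict (Set.Iic a))) := by
    apply Continuous.aestronglyMeasurable
    exact ((phi_cont.comp (by fun_prop)).mul (phi_cont.comp (by fun_prop)))
  have hint : Integrable
      (Function.uncurry fun (t x : ℝ) => phi (x + c * t) * phi t)
      ((volume : Measure ℝ).prod ((volume : Measure ℝ).restrict (Set.Iic a))) := by
    rw [integrable_prod_iff hmeas]
    constructor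
    · refine Filter.Eventually.of_forall fun t => ?_
      have : Integrable (fun x : ℝ => phi (x + c * t)) := by
        simpa using phi_integrable.comp_add_right (c * t)
      exact (this.mul_const (phi t)).integrableOn
    · have heq : ∀ t : ℝ, (∫ x in Set.Iic a, ‖phi (x + c * t) * phi t‖)
          = Phi (a + c * t) * phi t := by
        intro t
        rw [Phi_shift a (c * t), ← integral_mul_const]
        refine integral_congr_ae (Filter.Eventually.of_forall fun x => ?_)
        exact norm_of_nonneg (mul_nonneg (phi_nonneg _) (phi_nonneg _))
      simp only [Function.uncurry_apply_pair]
      simp_rw [heq]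
      refine Integrable.mono' phi_integrable ?_
        (Filter.Eventually.of_forall fun t => ?_)
      · exact ((Phi_measurable.comp (by fun_prop)).mul
          phi_cont.measurable).aestronglyMeasurable
      · rw [norm_of_nonneg (mul_nonneg (Phi_nonneg _) (phi_nonneg _))]
        exact mul_le_of_le_one_left (phi_nonneg t) (Phi_le_one _)
  rw [integral_integral_swap hint]
  -- apply the gaussian convolution identity pointwise
  have step2 : ∀ x : ℝ, (∫ t : ℝ, phi (x + c * t) * phi t)
      = (Real.sqrt (1 + c ^ 2))⁻¹ * phi (x / Real.sqrt (1 + c ^ 2)) :=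
    fun x => gauss_conv c x
  rw [setIntegral_congr_fun measurableSet_Iic fun x _ => step2 x]
  -- change of variables in the outer integral
  rw [integral_const_mul]
  have : ∀ x : ℝ, phi (x / Real.sqrt (1 + c ^ 2))
      = phi ((Real.sqrt (1 + c ^ 2))⁻¹ * x) := by
    intro x; rw [div_eq_inv_mul]
  simp_rw [this]
  rw [integral_comp_mul_left_Iic' phi a (inv_pos.mpr hsb)]
  rw [smul_eq_mul, inv_inv, ← mul_assoc, inv_mul_cancel₀ hsb.ne', one_mul,
    inv_mul_eq_div]
  rfl
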